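/- For each n, the number of ordered m-tuples 1 ≤ i_1 ≤ ... ≤ i_m ≤ n with gap statistic w(i) = w > 0 is at most 2^{s-2} n^{s-1} (w+1)^s, where s = ⌊m/2⌋ + 1 and w(i) = max{j_1,...,j_s} with j_1 = i_2 − i_1, j_l = min{i_{2l} − i_{2l-1}, i_{2l-1} − i_{2l-2}} for l = 2,...,s−1, and j_s = i_m − i_{m-1}. -/

import Mathlib

/-!
Every gap term `j_l` is at most `w`, so a nondecreasing tuple can be recorded by: its first
entry together with the first gap; for each middle pair `(i_{2l-1}, i_{2l})` a flag saying
which of the two gaps of `j_l` is small, one entry of the pair and that small gap; and the last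
gap. Reading the record from left to right recovers the tuple, since each pair is reconstructed
from the entry preceding it. The records range over a set with `n` choices for each of the
`s - 1` recorded entries, `w + 1` for each of the `s` gaps and `2` for each of the `s - 2` flags.
-/

namespace GapCount

open Finset

def extendByZero {m : ℕ} (i : Fin m → ℕ) (k : ℕ) : ℕ :=
  if hk : k < m then i ⟨k, hk⟩ else 0

lemma extendByZero_of_lt {m : ℕ} (i : Fin m → ℕ) {k : ℕ} (hk : k < m) :
    extendByZero i k = i ⟨k, hk⟩ :=
  dif_pos hk

lemma monotoneOn_extendByZero {m : ℕ} {i : Fin m → ℕ} (hi : Monotone i) :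
    MonotoneOn (extendByZero i) (Set.Iio m) := by
  intro a ha b hb hab
  rw [extendByZero_of_lt i ha, extendByZero_of_lt i hb]
  exact hi (Fin.mk_le_mk.mpr hab)

lemma extendByZero_injective {m : ℕ} : Function.Injective (extendByZero (m := m)) := by
  intro i j h
  funext a
  simpa only [extendByZero_of_lt _ a.isLt] using congrFun h a

/-- The paper's `j_l` for the tuple `i_k = f (k - 1)`, `1 ≤ k ≤ m`. -/
def gapTerm (m : ℕ) (f : ℕ → ℕ) (l : ℕ) : ℕ :=
  if l = 1 then f 1 - f 0
  else if l = m / 2 + 1 then f (m - 1) - f (m - 2)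
  else min (f (2 * l - 1) - f (2 * l - 2)) (f (2 * l - 2) - f (2 * l - 3))

def pairCode (w p x y : ℕ) : Bool × ℕ × ℕ :=
  if y - x ≤ w then (true, x, y - x) else (false, y, x - p)

lemma pairCode_mem {n w p x y : ℕ} (hx : x ∈ Icc 1 n) (hy : y ∈ Icc 1 n)
    (h : min (y - x) (x - p) ≤ w) :
    pairCode w p x y ∈ (univ : Finset Bool) ×ˢ Icc 1 n ×ˢ range (w + 1) := by
  unfold pairCode
  split_ifs with hyx
  · simp [hx, Nat.lt_succ_of_le hyx]
  · simp only [mem_product, mem_univ, hy, mem_range, true_and]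
    omega

lemma eq_of_pairCode_eq {w p x y x' y' : ℕ} (hpx : p ≤ x) (hxy : x ≤ y) (hpx' : p ≤ x')
    (hxy' : x' ≤ y') (h : pairCode w p x y = pairCode w p x' y') : x = x' ∧ y = y' := by
  unfold pairCode at h
  split_ifs at h <;> simp only [Prod.mk.injEq, Bool.true_eq_false, Bool.false_eq_true,
    false_and, true_and] at h <;> omega

def code (m w : ℕ) (f : ℕ → ℕ) : ℕ × ℕ × (Fin (m / 2 - 1) → Bool × ℕ × ℕ) × ℕ :=
  (f 0, f 1 - f 0,
    fun l : Fin (m / 2 - 1) =>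
      pairCode w (f (2 * (l : ℕ) + 1)) (f (2 * (l : ℕ) + 2)) (f (2 * (l : ℕ) + 3)),
    f (m - 1) - f (m - 2))

def codeSpace (m n w : ℕ) : Finset (ℕ × ℕ × (Fin (m / 2 - 1) → Bool × ℕ × ℕ) × ℕ) :=
  Icc 1 n ×ˢ range (w + 1) ×ˢ
    Fintype.piFinset (fun _ => (univ : Finset Bool) ×ˢ Icc 1 n ×ˢ range (w + 1)) ×ˢ range (w + 1)

lemma card_codeSpace {m : ℕ} (hm : 2 ≤ m) (n w : ℕ) :
    #(codeSpace m n w) = 2 ^ (m / 2 - 1) * n ^ (m / 2) * (w + 1) ^ (m / 2 + 1) := by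
  obtain ⟨t, ht⟩ : ∃ t, m / 2 = t + 1 := ⟨m / 2 - 1, by omega⟩
  simp only [codeSpace, card_product, Fintype.card_piFinset, prod_const, card_univ,
    Fintype.card_bool, Fintype.card_fin, Nat.card_Icc, card_range, ht, Nat.add_sub_cancel, mul_pow]
  ring

lemma code_mem_codeSpace {m n w : ℕ} {f : ℕ → ℕ} (hm : 2 ≤ m)
    (hf : ∀ k < m, f k ∈ Icc 1 n) (hgap : ∀ l ∈ Icc 1 (m / 2 + 1), gapTerm m f l ≤ w) :
    code m w f ∈ codeSpace m n w := by
  have hfirst := hgap 1 (by simp)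
  have hlast := hgap (m / 2 + 1) (by simp)
  rw [gapTerm, if_pos rfl] at hfirst
  rw [gapTerm, if_neg (by omega), if_pos rfl] at hlast
  refine mem_product.mpr ⟨hf 0 (by omega), mem_product.mpr
    ⟨mem_range.mpr (Nat.lt_succ_of_le hfirst), mem_product.mpr
      ⟨Fintype.mem_piFinset.mpr fun l => ?_, mem_range.mpr (Nat.lt_succ_of_le hlast)⟩⟩⟩
  have hl : (l : ℕ) + 2 < m / 2 + 1 := by omega
  have hmid := hgap (l + 2) (mem_Icc.mpr ⟨by omega, hl.le⟩)
  rw [gapTerm, if_neg (by omega), if_neg hl.ne, show 2 * ((l : ℕ) + 2) - 1 = 2 * l + 3 by omega,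
    show 2 * ((l : ℕ) + 2) - 2 = 2 * l + 2 by omega,
    show 2 * ((l : ℕ) + 2) - 3 = 2 * l + 1 by omega] at hmid
  exact pairCode_mem (hf (2 * l + 2) (by omega)) (hf (2 * l + 3) (by omega)) hmid

lemma eqOn_of_code_eq {m w : ℕ} {f g : ℕ → ℕ} (hm : 2 ≤ m) (hf : MonotoneOn f (Set.Iio m))
    (hg : MonotoneOn g (Set.Iio m)) (h : code m w f = code m w g) :
    Set.EqOn f g (Set.Iio m) := by
  have hmono : ∀ {a b}, a ≤ b → b < m → f a ≤ f b ∧ g a ≤ g b := fun hab hb =>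
    ⟨hf (lt_of_le_of_lt hab hb) hb hab, hg (lt_of_le_of_lt hab hb) hb hab⟩
  simp only [code, Prod.mk.injEq, funext_iff] at h
  obtain ⟨h0, h1, hpair, hlast⟩ := h
  have hpairs : ∀ l ≤ m / 2 - 1, f (2 * l) = g (2 * l) ∧ f (2 * l + 1) = g (2 * l + 1) := by
    intro l
    induction l with
    | zero =>
      intro _
      have := hmono (a := 0) (b := 1) zero_le_one (by omega)
      simp only [mul_zero, zero_add]
      omega
    | succ l ih =>
      intro hl
      obtain ⟨-, hprev⟩ := ih (by omega)
      have hcode := hpair ⟨l, by omega⟩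
      have h12 := hmono (a := 2 * l + 1) (b := 2 * l + 2) (by omega) (by omega)
      have h23 := hmono (a := 2 * l + 2) (b := 2 * l + 3) (by omega) (by omega)
      rw [hprev] at hcode h12
      rw [show 2 * (l + 1) = 2 * l + 2 by ring]
      exact eq_of_pairCode_eq (by omega) h23.1 h12.2 h23.2 hcode
  intro k hk
  rw [Set.mem_Iio] at hk
  by_cases hk' : k < 2 * (m / 2)
  · obtain ⟨l, rfl | rfl⟩ := Nat.even_or_odd' k
    · exact (hpairs l (by omega)).1
    · exact (hpairs l (by omega)).2
  · obtain ⟨-, hprev⟩ := hpairs (m / 2 - 1) le_rfl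
    have := hmono (a := m - 2) (b := m - 1) (by omega) (by omega)
    rw [show 2 * (m / 2 - 1) + 1 = m - 2 by omega] at hprev
    rw [show k = m - 1 by omega]
    omega

theorem card_le_of_monotone_of_gapTerm_le {m n w : ℕ} (hm : 2 ≤ m) {s : Finset (Fin m → ℕ)}
    (hs : ∀ i ∈ s, (∀ k, i k ∈ Icc 1 n) ∧ Monotone i ∧
      ∀ l ∈ Icc 1 (m / 2 + 1), gapTerm m (extendByZero i) l ≤ w) :
    #s ≤ 2 ^ (m / 2 - 1) * n ^ (m / 2) * (w + 1) ^ (m / 2 + 1) := by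
  rw [← card_codeSpace hm n w]
  refine card_le_card_of_injOn (code m w ∘ extendByZero) (fun i hi => ?_) (fun i hi j hj h => ?_)
  · obtain ⟨hrange, -, hgap⟩ := hs i hi
    refine code_mem_codeSpace hm (fun k hk => ?_) hgap
    rw [extendByZero_of_lt i hk]
    exact hrange _
  · refine extendByZero_injective (funext fun k => ?_)
    by_cases hk : k < m
    · exact eqOn_of_code_eq hm (monotoneOn_extendByZero (hs i hi).2.1)
        (monotoneOn_extendByZero (hs j hj).2.1) h hk
    · simp [extendByZero, hk]

end GapCount

theorem stmt_10_general (m n : ℕ) (hm : 3 ≤ m) (w : ℕ) :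
    (@Finset.filter (Fin m → ℕ)
      (fun i =>
        (∀ a b : Fin m, a ≤ b → i a ≤ i b) ∧
        ((Finset.Icc 1 (m / 2 + 1)).sup (fun l =>
          let i' : ℕ → ℕ := fun k => if hk : k < m then i ⟨k, hk⟩ else 0
          if l = 1 then i' 1 - i' 0
          else if l = m / 2 + 1 then i' (m - 1) - i' (m - 2)
          else min (i' (2 * l - 1) - i' (2 * l - 2))
                   (i' (2 * l - 2) - i' (2 * l - 3))) = w))
      (fun i => Classical.propDecidable _)
      (Fintype.piFinset fun _ : Fin m => Finset.Icc 1 n)).card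
      ≤ 2 ^ (m / 2 + 1 - 2) * n ^ (m / 2 + 1 - 1) * (w + 1) ^ (m / 2 + 1) := by
  rw [show m / 2 + 1 - 2 = m / 2 - 1 by omega, Nat.add_sub_cancel]
  refine GapCount.card_le_of_monotone_of_gapTerm_le (by omega) fun i hi => ?_
  simp only [Finset.mem_filter, Fintype.mem_piFinset] at hi
  obtain ⟨hrange, hmono, hsup⟩ := hi
  exact ⟨hrange, hmono, Finset.sup_le_iff.mp hsup.le⟩

/-- The number of ordered m-tuples in {1,...,n}^m with gap statistic w(i) = w > 0
is at most 2^{s-2} n^{s-1} (w+1)^s where s = ⌊m/2⌋ + 1. -/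
theorem stmt_10 (m n : ℕ) (hm : 3 ≤ m) (hn : 1 ≤ n) (w : ℕ) (hw : 0 < w) :
    (@Finset.filter (Fin m → ℕ)
      (fun i =>
        (∀ a b : Fin m, a ≤ b → i a ≤ i b) ∧
        ((Finset.Icc 1 (m / 2 + 1)).sup (fun l =>
          let i' : ℕ → ℕ := fun k => if hk : k < m then i ⟨k, hk⟩ else 0
          if l = 1 then i' 1 - i' 0
          else if l = m / 2 + 1 then i' (m - 1) - i' (m - 2)
          else min (i' (2 * l - 1) - i' (2 * l - 2))
                   (i' (2 * l - 2) - i' (2 * l - 3))) = w))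
      (fun i => Classical.propDecidable _)
      (Fintype.piFinset fun _ : Fin m => Finset.Icc 1 n)).card
      ≤ 2 ^ (m / 2 + 1 - 2) * n ^ (m / 2 + 1 - 1) * (w + 1) ^ (m / 2 + 1) :=
  stmt_10_general m n hm w
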